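/- arXiv:1607.06982 — 3 statements merged into one kernel-verified Lean document; each statement's English description precedes it below -/
import Mathlib

section
/- For any integer m ≥ 0, invertible variable x with inverse x̄ = x^{-1}, and sequence a, the coefficient of t^m in 1/((1-tx)(1-tx̄)) · ∏_{j=1}^{m}(1+t·a_j) equals (x·(x|a)^m − x̄·(x̄|a)^m)/(x − x̄). -/
open PowerSeries Finset

noncomputable section

/-- `geom x` is the formal power series `1/(1-tx) = ∑ xⁿ tⁿ`. -/
def geom {R : Type*} [CommRing R] (x : R) : PowerSeries R := PowerSeries.mk fun n => x ^ n

/-- `lin a` is the formal power series `1 + t·a`. -/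
def lin {R : Type*} [CommRing R] (a : R) : PowerSeries R :=
  1 + PowerSeries.C a * PowerSeries.X

/-- Factorial power `(x|a)^m = (x+a₁)(x+a₂)···(x+a_m)`. -/
def factPow {R : Type*} [CommRing R] (x : R) (a : ℕ → R) (m : ℕ) : R :=
  ∏ k ∈ Finset.range m, (x + a (k + 1))

/-! Multiplying by `x - y` turns every coefficient of `geom x * geom y` into a difference of
powers, and each factor `1 + t aⱼ` then raises both powers by the corresponding factor `(· + aⱼ)`
of the factorial power. So for arbitrary `x`, `y`, the coefficient of `t^(m+k)` times `x - y`
equals `x^(k+1) (x|a)^m - y^(k+1) (y|a)^m`; the theorem is the case `y = x⁻¹`, `k = 0`. -/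

section

variable {R : Type*} [CommRing R]

lemma factPow_succ (x : R) (a : ℕ → R) (m : ℕ) :
    factPow x a (m + 1) = factPow x a m * (x + a (m + 1)) :=
  prod_range_succ _ m

lemma coeff_succ_mul_lin (f : PowerSeries R) (a : R) (n : ℕ) :
    coeff (n + 1) (f * lin a) = coeff (n + 1) f + a * coeff n f := by
  have h : f * lin a = f + C a * f * X := by rw [lin]; ring
  rw [h, map_add, coeff_succ_mul_X, coeff_C_mul]

lemma coeff_geom_mul_geom (x y : R) (n : ℕ) :
    coeff n (geom x * geom y) = ∑ i ∈ range (n + 1), x ^ i * y ^ (n - i) := by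
  rw [coeff_mul, Nat.sum_antidiagonal_eq_sum_range_succ_mk]
  simp only [geom, coeff_mk]

lemma sub_mul_coeff_geom_mul_geom (x y : R) (n : ℕ) :
    (x - y) * coeff n (geom x * geom y) = x ^ (n + 1) - y ^ (n + 1) := by
  rw [coeff_geom_mul_geom, mul_comm, ← geom_sum₂_mul]
  simp only [Nat.add_sub_cancel]

lemma sub_mul_coeff_geom_mul_geom_mul_prod_lin (x y : R) (a : ℕ → R) (m k : ℕ) :
    (x - y) * coeff (m + k) (geom x * geom y * ∏ j ∈ range m, lin (a (j + 1))) =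
      x ^ (k + 1) * factPow x a m - y ^ (k + 1) * factPow y a m := by
  induction m generalizing k with
  | zero => simpa [factPow] using sub_mul_coeff_geom_mul_geom x y k
  | succ m ih =>
    rw [prod_range_succ, ← mul_assoc, show m + 1 + k = m + k + 1 by omega, coeff_succ_mul_lin,
      mul_add, mul_left_comm, ih k, show m + k + 1 = m + (k + 1) by omega, ih (k + 1),
      factPow_succ, factPow_succ]
    ring

end

theorem stmt1_general {K : Type*} [Field K] (x : K) (a : ℕ → K) (m : ℕ)
    (hxx : x ≠ x⁻¹) :
    PowerSeries.coeff m (geom x * geom x⁻¹ * ∏ j ∈ Finset.range m, lin (a (j + 1))) =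
      (x * factPow x a m - x⁻¹ * factPow x⁻¹ a m) / (x - x⁻¹) := by
  rw [eq_div_iff (sub_ne_zero.mpr hxx), mul_comm]
  simpa using sub_mul_coeff_geom_mul_geom_mul_prod_lin x x⁻¹ a m 0

/-- Coefficient of tᵐ in 1/((1-tx)(1-tx̄))·∏_{j=1}^m (1+t aⱼ)
equals (x(x|a)^m − x̄(x̄|a)^m)/(x−x̄). -/
theorem stmt1 {K : Type*} [Field K] (x : K) (a : ℕ → K) (m : ℕ)
    (hx : x ≠ 0) (hxx : x ≠ x⁻¹) :
    PowerSeries.coeff m (geom x * geom x⁻¹ * ∏ j ∈ Finset.range m, lin (a (j + 1))) =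
      (x * factPow x a m - x⁻¹ * factPow x⁻¹ a m) / (x - x⁻¹) :=
  stmt1_general x a m hxx
end
end

section
/- Define h^{sp}_m(x_i, x̄_i, ..., x_j, x̄_j | a) as the coefficient of t^m in ∏_{ℓ=i}^{j} 1/((1-t x_ℓ)(1-t x̄_ℓ)) · ∏_{k=1}^{m+j-i}(1+t a_k). Then for 1 ≤ i < j and m ≥ 1: h^{sp}_m(x_i,x̄_i,...,x_{j-1},x̄_{j-1}|a) − h^{sp}_m(x_{i+1},x̄_{i+1},...,x_j,x̄_j|a) = (x_i − x_j)(1 − x̄_i x̄_j)·h^{sp}_{m-1}(x_i,x̄_i,...,x_j,x̄_j|a). -/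
open PowerSeries Finset

noncomputable section

/-!
The products over `ℓ ∈ [i, j-1]` and `ℓ ∈ [i+1, j]` share the factors with `i < ℓ < j`, and all
three products `∏ (1 + t aₖ)` in the statement have the same length. So the left side is the
coefficient of `tᵐ` in `(Gᵢ - Gⱼ) · (common factor)`, where `G_ℓ = 1/((1 - t x_ℓ)(1 - t x̄_ℓ))`.
Since `x x̄ = 1`, `(1 - t x)(1 - t x̄) = 1 - t (x + x̄) + t²`, hence
`Gᵢ - Gⱼ = t (xᵢ + x̄ᵢ - xⱼ - x̄ⱼ) Gᵢ Gⱼ = t (xᵢ - xⱼ)(1 - x̄ᵢ x̄ⱼ) Gᵢ Gⱼ`,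
and extracting the coefficient of `tᵐ` gives the right side.
-/

section

variable {R : Type*} [CommRing R]

theorem one_sub_C_mul_X_mul_geom (x : R) : (1 - C x * X) * geom x = 1 := by
  ext (_ | n)
  · simp [geom]
  · simp only [sub_mul, one_mul, map_sub, mul_assoc, coeff_C_mul, coeff_succ_X_mul, geom,
      coeff_mk, coeff_one]
    simp [pow_succ, mul_comm]

theorem geom_mul_geom_sub_geom_mul_geom {x xb y yb : R} (hx : x * xb = 1) (hy : y * yb = 1) :
    geom x * geom xb - geom y * geom yb
      = C ((x - y) * (1 - xb * yb)) * X * (geom x * geom xb * (geom y * geom yb)) := by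
  have inv_of_quadratic (u ub : R) :
      ((1 - C u * X) * (1 - C ub * X)) * (geom u * geom ub) = 1 := by
    rw [mul_mul_mul_comm, one_sub_C_mul_X_mul_geom, one_sub_C_mul_X_mul_geom, one_mul]
  have hCx : C x * C xb = 1 := by rw [← map_mul, hx, map_one]
  have hCy : C y * C yb = 1 := by rw [← map_mul, hy, map_one]
  have quadratic_sub :
      (1 - C y * X) * (1 - C yb * X) - (1 - C x * X) * (1 - C xb * X)
        = C ((x - y) * (1 - xb * yb)) * X := by
    simp only [map_mul, map_sub, map_one]
    linear_combination (C yb * X - X ^ 2) * hCx + (X ^ 2 - C xb * X) * hCy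
  linear_combination geom y * geom yb * inv_of_quadratic x xb
    - geom x * geom xb * inv_of_quadratic y yb
    + geom x * geom xb * (geom y * geom yb) * quadratic_sub

theorem coeff_succ_C_mul_X_mul (c : R) (n : ℕ) (φ : PowerSeries R) :
    coeff (n + 1) (C c * X * φ) = c * coeff n φ := by
  rw [mul_assoc, coeff_C_mul, coeff_succ_X_mul]

end

/-- Symplectic analogue: h^{sp}ₘ on pairs (x_ℓ, x̄_ℓ), ℓ = i..j-1, minus that on ℓ = i+1..j,
equals (x_i−x_j)(1−x̄_i x̄_j)·h^{sp}_{m-1} on ℓ = i..j. -/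
theorem stmt4 {R : Type*} [CommRing R] (x xb a : ℕ → R) (hinv : ∀ ℓ, x ℓ * xb ℓ = 1)
    (i j m : ℕ) (hij : i < j) (hm : 1 ≤ m) :
    PowerSeries.coeff m ((∏ ℓ ∈ Finset.Icc i (j - 1), geom (x ℓ) * geom (xb ℓ)) *
        ∏ k ∈ Finset.range (m + (j - 1) - i), lin (a (k + 1)))
    - PowerSeries.coeff m ((∏ ℓ ∈ Finset.Icc (i + 1) j, geom (x ℓ) * geom (xb ℓ)) *
        ∏ k ∈ Finset.range (m + j - (i + 1)), lin (a (k + 1)))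
    = (x i - x j) * (1 - xb i * xb j) *
        PowerSeries.coeff (m - 1) ((∏ ℓ ∈ Finset.Icc i j, geom (x ℓ) * geom (xb ℓ)) *
          ∏ k ∈ Finset.range ((m - 1) + j - i), lin (a (k + 1))) := by
  obtain ⟨n, rfl⟩ : ∃ n, m = n + 1 := ⟨m - 1, by omega⟩
  obtain ⟨p, rfl, hip⟩ : ∃ p, j = p + 1 ∧ i ≤ p := ⟨j - 1, by omega, by omega⟩
  rw [show n + 1 + (p + 1 - 1) - i = n + (p + 1) - i by omega,
    show n + 1 + (p + 1) - (i + 1) = n + (p + 1) - i by omega, add_tsub_cancel_right,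
    add_tsub_cancel_right]
  set G : ℕ → PowerSeries R := fun ℓ ↦ geom (x ℓ) * geom (xb ℓ)
  set L := ∏ k ∈ range (n + (p + 1) - i), lin (a (k + 1))
  set F := ∏ ℓ ∈ Icc (i + 1) p, G ℓ
  have split_bot : ∏ ℓ ∈ Icc i p, G ℓ = G i * F := by
    rw [← insert_Icc_add_one_left_eq_Icc hip, prod_insert (by simp)]
  rw [prod_Icc_succ_top (by omega), prod_Icc_succ_top (by omega), split_bot, ← map_sub,
    show G i * F * L - F * G (p + 1) * L = (G i - G (p + 1)) * (F * L) by ring,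
    geom_mul_geom_sub_geom_mul_geom (hinv i) (hinv (p + 1)), mul_assoc,
    coeff_succ_C_mul_X_mul]
  congr 2
  ring
end
end

section
/- Factorial Tokuyama-type factorization (Schur case, determinantal form): for λ = μ + δ with δ = (n, n−1, ..., 1) and μ a partition of length ≤ n, the determinant det((x_i + y_i)·q_{λ_j − 1}(x^{(i)}; y^{(i+1)} | a))_{1≤i,j≤n} equals ∏_{1≤i≤j≤n}(x_i + y_j) · det(h_{μ_j − j + i}(x^{(i)} | a))_{1≤i,j≤n}, where q_m(x^{(d)}; y^{(d+1)} | a) is the coefficient of t^m in [∏_{j=d+1}^n (1+t y_j) · ∏_{k=1}^m (1+t a_k)] / ∏_{i=d}^n (1-t x_i), and h_m(x^{(i)}|a) is the coefficient of t^m in ∏_{ℓ=i}^n 1/(1-t x_ℓ) · ∏_{k=1}^{m+n-i}(1+t a_k). -/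
open PowerSeries Finset

noncomputable section

/-- Flagged factorial complete function h_m(x_p,…,x_q | a), zero for m < 0. -/
def hfun {R : Type*} [CommRing R] (x a : ℕ → R) (p q : ℕ) (m : ℤ) : R :=
  if m < 0 then 0 else
    PowerSeries.coeff m.toNat ((∏ ℓ ∈ Finset.Icc p q, geom (x ℓ)) *
      ∏ k ∈ Finset.range (m.toNat + q - p), lin (a (k + 1)))

/-- Symplectic flagged factorial complete function h^{sp}_m(x_p,x̄_p,…,x_q,x̄_q | a). -/
def hsp {R : Type*} [CommRing R] (x xb a : ℕ → R) (p q : ℕ) (m : ℤ) : R :=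
  if m < 0 then 0 else
    PowerSeries.coeff m.toNat ((∏ ℓ ∈ Finset.Icc p q, geom (x ℓ) * geom (xb ℓ)) *
      ∏ k ∈ Finset.range (m.toNat + q - p), lin (a (k + 1)))

/-!
The left-hand matrix factors as `M * H`, with `H = (h_{μ_j-j+i}(x^{(i)} | a))` and `M` upper
triangular. Row `i` of `M` records the expansion of `L / ∏_{ℓ≥i} (1 - t x_ℓ)`,
`L = ∏_{p>i} (1 + t y_p)`, in the basis `t^{n-k} / ∏_{ℓ≥k} (1 - t x_ℓ)`, `k ≥ i`: write
`L = T (1 - t x_i) + c t^{n-i}` with `deg T < n - i`, then treat `T` and `x_{i+1}` alike, and so on.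
The diagonal entry is `c = coeff_{n-i} (L / (1 - t x_i)) = x_i^{n-i} L(1/x_i)`, that is
`∏_{p>i} (x_i + y_p)`, so `det M = ∏_{i≤j} (x_i + y_j)`.
-/

section Tokuyama

variable {R : Type*} [CommRing R]

lemma coeff_geom (x : R) (d : ℕ) : coeff d (geom x) = x ^ d := coeff_mk _ _

lemma geom_eq_one_add_X_mul (x : R) : geom x = 1 + X * (C x * geom x) := by
  ext (_ | d)
  · simp [coeff_geom]
  · simp [coeff_succ_X_mul, coeff_geom, pow_succ', coeff_one]

lemma coeff_succ_mul_geom (F : R⟦X⟧) (x : R) (d : ℕ) :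
    coeff (d + 1) (F * geom x) = coeff (d + 1) F + x * coeff d (F * geom x) := by
  have h : F * geom x = F + X * (C x * (F * geom x)) := by
    nth_rewrite 1 [geom_eq_one_add_X_mul]; ring
  rw [h, map_add, coeff_succ_X_mul, coeff_C_mul, ← h]

lemma coeff_succ_lin_mul (a : R) (F : R⟦X⟧) (d : ℕ) :
    coeff (d + 1) (lin a * F) = coeff (d + 1) F + a * coeff d F := by
  rw [lin, add_mul, one_mul, mul_assoc, mul_left_comm, map_add, coeff_succ_X_mul, coeff_C_mul]

lemma coeff_mul_geom_of_le {L : R⟦X⟧} {N : ℕ} (hL : ∀ d, N < d → coeff d L = 0) (x : R)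
    {d : ℕ} (hd : N ≤ d) : coeff d (L * geom x) = x ^ (d - N) * coeff N (L * geom x) := by
  induction d, hd using Nat.le_induction with
  | base => simp
  | succ d hNd ih =>
    rw [coeff_succ_mul_geom, hL _ (by omega), ih, Nat.sub_add_comm hNd, pow_succ]
    ring

lemma coeff_prod_lin_of_card_lt (y : ℕ → R) (s : Finset ℕ) {d : ℕ} (hd : #s < d) :
    coeff d (∏ p ∈ s, lin (y p)) = 0 := by
  induction s using Finset.cons_induction generalizing d with
  | empty => simp [coeff_one]; omega
  | cons a s ha ih =>
    obtain ⟨d, rfl⟩ : ∃ e, d = e + 1 := ⟨d - 1, by rw [card_cons] at hd; omega⟩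
    rw [card_cons] at hd
    rw [prod_cons, coeff_succ_lin_mul, ih (by omega), ih (by omega), mul_zero, add_zero]

lemma coeff_card_prod_lin_mul_geom (y : ℕ → R) (x : R) (s : Finset ℕ) :
    coeff #s ((∏ p ∈ s, lin (y p)) * geom x) = ∏ p ∈ s, (x + y p) := by
  induction s using Finset.cons_induction with
  | empty => simp [coeff_geom]
  | cons a s ha ih =>
    rw [card_cons, prod_cons, mul_assoc, coeff_succ_lin_mul,
      coeff_mul_geom_of_le (fun d hd => coeff_prod_lin_of_card_lt y s hd) x (Nat.le_add_right _ 1),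
      ih, prod_cons, Nat.add_sub_cancel_left, pow_one]
    ring

lemma mul_prod_geom_eq_sum (x : ℕ → R) (n : ℕ) {i : ℕ} {L : R⟦X⟧}
    (hL : ∀ d, n < d + i → coeff d L = 0) :
    L * ∏ ℓ ∈ Icc i n, geom (x ℓ) =
      ∑ k ∈ Icc i n, C (coeff (n - k) (L * ∏ ℓ ∈ Icc i k, geom (x ℓ))) * X ^ (n - k) *
        ∏ ℓ ∈ Icc k n, geom (x ℓ) := by
  induction hm : n + 1 - i generalizing i L with
  | zero =>
    obtain rfl : L = 0 := ext fun d => by simpa using hL d (by omega)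
    simp
  | succ m ih =>
    have hi : i ≤ n := by omega
    have prod_Icc_eq : ∀ k, i ≤ k →
        ∏ ℓ ∈ Icc i k, geom (x ℓ) = geom (x i) * ∏ ℓ ∈ Icc (i + 1) k, geom (x ℓ) := fun k hk => by
      rw [← insert_Icc_add_one_left_eq_Icc hk, prod_insert (by simp)]
    set c := coeff (n - i) (L * geom (x i))
    -- `L = T (1 - x_i t) + c t^{n-i}` with `deg T < n - i`.
    set T := L * geom (x i) - C c * X ^ (n - i) * geom (x i) with hT_def
    have hT : ∀ d, n < d + (i + 1) → coeff d T = 0 := by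
      intro d hd
      rw [map_sub, coeff_mul_geom_of_le (N := n - i) (fun e he => hL e (by omega)) _ (by omega),
        mul_assoc, coeff_C_mul, coeff_X_pow_mul', if_pos (by omega), coeff_geom]
      ring
    have coeff_T_mul : ∀ k ∈ Icc (i + 1) n, coeff (n - k) (T * ∏ ℓ ∈ Icc (i + 1) k, geom (x ℓ)) =
        coeff (n - k) (L * ∏ ℓ ∈ Icc i k, geom (x ℓ)) := by
      intro k hk
      rw [mem_Icc] at hk
      rw [prod_Icc_eq k (by omega), hT_def, sub_mul, map_sub]
      simp only [mul_assoc]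
      rw [coeff_C_mul, coeff_X_pow_mul', if_neg (by omega), mul_zero, sub_zero]
    rw [prod_Icc_eq n hi, ← mul_assoc, show L * geom (x i) = T + C c * X ^ (n - i) * geom (x i) by
      rw [hT_def, sub_add_cancel], add_mul, ih hT (by omega), ← insert_Icc_add_one_left_eq_Icc hi,
      sum_insert (by simp), Icc_self, prod_singleton, add_comm, sum_congr rfl fun k hk => by
      rw [coeff_T_mul k hk], prod_Icc_eq n hi]
    ring

@[to_additive]
lemma prod_Ici_eq_prod_Icc_succ {M : Type*} [CommMonoid M] {n : ℕ} (i : Fin n) (g : ℕ → M) :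
    ∏ j ∈ Ici i, g (j + 1) = ∏ p ∈ Icc ((i : ℕ) + 1) n, g p := by
  rw [← Ico_add_one_right_eq_Icc, ← prod_Ico_add', ← Fin.map_valEmbedding_Ici, prod_map]
  rfl

lemma coeff_prod_lin_mul_prod_geom_mul (x y : ℕ → R) {n p : ℕ} (hp : p ≤ n) (N : ℕ) (F : R⟦X⟧) :
    coeff N ((∏ r ∈ Icc (p + 1) n, lin (y r)) * (∏ ℓ ∈ Icc p n, geom (x ℓ)) * F) =
      ∑ q ∈ Icc p n, coeff (n - q) ((∏ r ∈ Icc (p + 1) n, lin (y r)) * ∏ ℓ ∈ Icc p q, geom (x ℓ)) *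
        coeff N (X ^ (n - q) * ((∏ ℓ ∈ Icc q n, geom (x ℓ)) * F)) := by
  have hdeg : ∀ d, n < d + p → coeff d (∏ r ∈ Icc (p + 1) n, lin (y r)) = 0 :=
    fun d hd => coeff_prod_lin_of_card_lt y _ (by rw [Nat.card_Icc]; omega)
  rw [mul_prod_geom_eq_sum x n hdeg, sum_mul, map_sum]
  refine sum_congr rfl fun q _ => ?_
  rw [mul_assoc, mul_assoc, coeff_C_mul]

lemma hfun_eq_coeff (x a : ℕ → R) {n j q : ℕ} (hj : j ≤ n) (hq : q ≤ n) (mu : ℕ) :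
    hfun x a q n ((mu : ℤ) - j + q) =
      coeff (mu + (n - j)) (X ^ (n - q) *
        ((∏ ℓ ∈ Icc q n, geom (x ℓ)) * ∏ k ∈ range (mu + (n - j)), lin (a (k + 1)))) := by
  rw [hfun, coeff_X_pow_mul']
  by_cases hneg : (mu : ℤ) - j + q < 0
  · rw [if_pos hneg, if_neg (by omega)]
  · rw [if_neg hneg, if_pos (by omega),
      show ((mu : ℤ) - j + q).toNat = mu + (n - j) - (n - q) by omega,
      show mu + (n - j) - (n - q) + n - q = mu + (n - j) by omega]

def tokuyamaFactor (x y : ℕ → R) (n : ℕ) : Matrix (Fin n) (Fin n) R :=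
  Matrix.of fun i k => (x ((i : ℕ) + 1) + y ((i : ℕ) + 1)) *
    coeff (n - ((k : ℕ) + 1))
      ((∏ r ∈ Icc ((i : ℕ) + 1 + 1) n, lin (y r)) *
        ∏ ℓ ∈ Icc ((i : ℕ) + 1) ((k : ℕ) + 1), geom (x ℓ))

lemma tokuyamaFactor_isUpperTriangular (x y : ℕ → R) (n : ℕ) :
    (tokuyamaFactor x y n).IsUpperTriangular := by
  intro i k hki
  rw [id, id, Fin.lt_def] at hki
  rw [tokuyamaFactor, Matrix.of_apply, Icc_eq_empty (a := (i : ℕ) + 1) (by omega), prod_empty,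
    mul_one, coeff_prod_lin_of_card_lt y _ (by rw [Nat.card_Icc]; omega), mul_zero]

lemma tokuyamaFactor_apply_self (x y : ℕ → R) {n : ℕ} (i : Fin n) :
    tokuyamaFactor x y n i i = ∏ j ∈ Ici i, (x ((i : ℕ) + 1) + y ((j : ℕ) + 1)) := by
  have hcard : n - ((i : ℕ) + 1) = #(Icc ((i : ℕ) + 1 + 1) n) := by rw [Nat.card_Icc]; omega
  rw [tokuyamaFactor, Matrix.of_apply, Icc_self, prod_singleton, hcard,
    coeff_card_prod_lin_mul_geom, prod_Ici_eq_prod_Icc_succ i fun p => x ((i : ℕ) + 1) + y p,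
    ← insert_Icc_add_one_left_eq_Icc (a := (i : ℕ) + 1) (b := n) (by omega), prod_insert (by simp)]

lemma det_tokuyamaFactor (x y : ℕ → R) (n : ℕ) :
    (tokuyamaFactor x y n).det = ∏ i : Fin n, ∏ j ∈ Ici i, (x ((i : ℕ) + 1) + y ((j : ℕ) + 1)) := by
  rw [Matrix.det_of_isUpperTriangular (tokuyamaFactor_isUpperTriangular x y n)]
  exact prod_congr rfl fun i _ => tokuyamaFactor_apply_self x y i

lemma of_eq_tokuyamaFactor_mul (x y a : ℕ → R) (n : ℕ) (mu : ℕ → ℕ) :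
    Matrix.of (fun i j : Fin n =>
        (x ((i : ℕ) + 1) + y ((i : ℕ) + 1)) *
          coeff (mu ((j : ℕ) + 1) + (n - 1 - (j : ℕ)))
            ((∏ ℓ ∈ Icc ((i : ℕ) + 1) n, geom (x ℓ)) *
              (∏ p ∈ Icc ((i : ℕ) + 2) n, lin (y p)) *
              ∏ k ∈ range (mu ((j : ℕ) + 1) + (n - 1 - (j : ℕ))), lin (a (k + 1)))) =
      tokuyamaFactor x y n * Matrix.of (fun i j : Fin n =>
        hfun x a ((i : ℕ) + 1) n ((mu ((j : ℕ) + 1) : ℤ) - ((j : ℕ) + 1) + ((i : ℕ) + 1))) := by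
  ext i j
  have hN : n - 1 - (j : ℕ) = n - ((j : ℕ) + 1) := by omega
  set N := mu ((j : ℕ) + 1) + (n - ((j : ℕ) + 1))
  have hfun_apply : ∀ k : Fin n,
      hfun x a ((k : ℕ) + 1) n ((mu ((j : ℕ) + 1) : ℤ) - ((j : ℕ) + 1) + ((k : ℕ) + 1)) =
        coeff N (X ^ (n - ((k : ℕ) + 1)) * ((∏ ℓ ∈ Icc ((k : ℕ) + 1) n, geom (x ℓ)) *
          ∏ r ∈ range N, lin (a (r + 1)))) := fun k => by
    have h := hfun_eq_coeff x a (n := n) (j := (j : ℕ) + 1) (q := (k : ℕ) + 1) (by omega) (by omega)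
      (mu ((j : ℕ) + 1))
    push_cast at h
    exact h
  rw [Matrix.mul_apply, ← sum_subset (subset_univ (Ici i)) fun k _ hk => by
    rw [tokuyamaFactor_isUpperTriangular x y n (by simpa using hk), zero_mul]]
  simp only [Matrix.of_apply, tokuyamaFactor, hfun_apply, hN, mul_assoc]
  rw [show (i : ℕ) + 2 = (i : ℕ) + 1 + 1 from rfl,
    sum_Ici_eq_sum_Icc_succ i fun q => (x ((i : ℕ) + 1) + y ((i : ℕ) + 1)) *
      (coeff (n - q) ((∏ r ∈ Icc ((i : ℕ) + 1 + 1) n, lin (y r)) *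
        ∏ ℓ ∈ Icc ((i : ℕ) + 1) q, geom (x ℓ)) *
      coeff N (X ^ (n - q) * ((∏ ℓ ∈ Icc q n, geom (x ℓ)) * ∏ r ∈ range N, lin (a (r + 1))))),
    ← mul_sum, ← coeff_prod_lin_mul_prod_geom_mul x y (by omega), ← mul_assoc,
    mul_comm (∏ ℓ ∈ _, _)]

end Tokuyama

theorem stmt19_general {R : Type*} [CommRing R] (n : ℕ) (x y a : ℕ → R)
    (mu : ℕ → ℕ) :
    Matrix.det (Matrix.of fun i j : Fin n =>
        (x ((i : ℕ) + 1) + y ((i : ℕ) + 1)) *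
          PowerSeries.coeff (mu ((j : ℕ) + 1) + (n - 1 - (j : ℕ)))
            ((∏ ℓ ∈ Finset.Icc ((i : ℕ) + 1) n, geom (x ℓ)) *
              (∏ p ∈ Finset.Icc ((i : ℕ) + 2) n, lin (y p)) *
              ∏ k ∈ Finset.range (mu ((j : ℕ) + 1) + (n - 1 - (j : ℕ))),
                lin (a (k + 1)))) =
    (∏ i : Fin n, ∏ j ∈ Finset.Ici i, (x ((i : ℕ) + 1) + y ((j : ℕ) + 1))) *
    Matrix.det (Matrix.of fun i j : Fin n =>
        hfun x a ((i : ℕ) + 1) n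
          ((mu ((j : ℕ) + 1) : ℤ) - ((j : ℕ) + 1) + ((i : ℕ) + 1))) := by
  rw [of_eq_tokuyamaFactor_mul, Matrix.det_mul, det_tokuyamaFactor]

/-- Factorial Tokuyama-type factorization (Schur case, determinantal form):
det((x_i+y_i)·q_{λ_j−1}(x^{(i)};y^{(i+1)}|a)) = ∏_{i≤j}(x_i+y_j)·det(h_{μ_j−j+i}(x^{(i)}|a)),
where λ_j = μ_j + n − j + 1. Indices are 1-based via i ↦ i+1 for i : Fin n. -/
theorem stmt19 {R : Type*} [CommRing R] (n : ℕ) (x y a : ℕ → R)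
    (mu : ℕ → ℕ) (hmu : ∀ j, mu (j + 1) ≤ mu j) :
    Matrix.det (Matrix.of fun i j : Fin n =>
        (x ((i : ℕ) + 1) + y ((i : ℕ) + 1)) *
          PowerSeries.coeff (mu ((j : ℕ) + 1) + (n - 1 - (j : ℕ)))
            ((∏ ℓ ∈ Finset.Icc ((i : ℕ) + 1) n, geom (x ℓ)) *
              (∏ p ∈ Finset.Icc ((i : ℕ) + 2) n, lin (y p)) *
              ∏ k ∈ Finset.range (mu ((j : ℕ) + 1) + (n - 1 - (j : ℕ))),
                lin (a (k + 1)))) =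
    (∏ i : Fin n, ∏ j ∈ Finset.Ici i, (x ((i : ℕ) + 1) + y ((j : ℕ) + 1))) *
    Matrix.det (Matrix.of fun i j : Fin n =>
        hfun x a ((i : ℕ) + 1) n
          ((mu ((j : ℕ) + 1) : ℤ) - ((j : ℕ) + 1) + ((i : ℕ) + 1))) :=
  stmt19_general n x y a mu
end
end
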